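/- arXiv:1305.4975 — 4 statements merged into one kernel-verified Lean document; each statement's English description precedes it below -/
import Mathlib

section
/- (Lions' Lemma / additive Schwarz operator representation) Let V be a finite-dimensional real inner product space and V = V₁ + ⋯ + V_N a (not necessarily direct) decomposition into subspaces. Let A be a symmetric positive definite bilinear form on V, and for each i let R_i be a symmetric positive definite bilinear form on V_i. Define the additive Schwarz preconditioner B⁻¹ implicitly by the operator B = Σᵢ Iᵢ Sᵢ⁻¹ Iᵢ*, where Iᵢ : Vᵢ → V is the inclusion and Sᵢ the operator of R_i. Then for every w ∈ V, ⟨B⁻¹ w, w⟩ = inf { Σᵢ R_i(w_i, w_i) : w_i ∈ V_i, Σᵢ w_i = w }. -/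
/-! With `u = B⁻¹ w`, the local solutions `w*ᵢ = Sᵢ⁻¹ Iᵢ* u` satisfy `Σ w*ᵢ = B u = w` and
`Rᵢ(w*ᵢ, v) = ⟪u, v⟫` for `v ∈ Vᵢ`. Hence `Σ Rᵢ(w*ᵢ, wᵢ) = ⟪u, w⟫` for every decomposition
`Σ wᵢ = w`, and expanding `Σ Rᵢ(wᵢ - w*ᵢ, wᵢ - w*ᵢ) ≥ 0` shows that `w*` attains the infimum,
whose value is `Σ Rᵢ(w*ᵢ, w*ᵢ) = ⟪u, w⟫`. -/

open LinearMap (BilinForm)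

/-- Completing the square: `R (x - a) (x - a) ≥ 0`. -/
theorem LinearMap.BilinForm.two_mul_apply_sub_apply_self_le {M : Type*} [AddCommGroup M]
    [Module ℝ M] (R : BilinForm ℝ M) (hsymm : ∀ u v, R u v = R v u)
    (hnn : ∀ v, 0 ≤ R v v) (a x : M) : 2 * R a x - R a a ≤ R x x := by
  have h := hnn (x - a)
  simp only [map_sub, LinearMap.sub_apply, hsymm x a] at h
  linarith

theorem isLeast_sum_apply_self_of_sum_apply_eq {ι : Type*} [Fintype ι] {M : ι → Type*}
    [∀ i, AddCommGroup (M i)] [∀ i, Module ℝ (M i)] (R : ∀ i, BilinForm ℝ (M i))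
    (hsymm : ∀ i u v, R i u v = R i v u) (hnn : ∀ i v, 0 ≤ R i v v)
    {C : Set (∀ i, M i)} {a : ∀ i, M i} (ha : a ∈ C) {c : ℝ}
    (hc : ∀ x ∈ C, ∑ i, R i (a i) (x i) = c) :
    IsLeast {s | ∃ x ∈ C, s = ∑ i, R i (x i) (x i)} c := by
  refine ⟨⟨a, ha, (hc a ha).symm⟩, ?_⟩
  rintro s ⟨x, hx, rfl⟩
  have hsq := Finset.sum_le_sum fun i (_ : i ∈ Finset.univ) =>
    (R i).two_mul_apply_sub_apply_self_le (hsymm i) (hnn i) (a i) (x i)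
  rw [Finset.sum_sub_distrib, ← Finset.mul_sum, hc x hx, hc a ha] at hsq
  linarith

theorem LinearMap.BilinForm.apply_adjoint_subtype_eq_inner {V : Type*} [NormedAddCommGroup V]
    [InnerProductSpace ℝ V] [FiniteDimensional ℝ V] {K : Submodule ℝ V} (R : BilinForm ℝ K)
    {S Sinv : K →ₗ[ℝ] K} (hS : ∀ u v, inner ℝ (S u) v = R u v)
    (hSinv : S ∘ₗ Sinv = LinearMap.id) (u : V) (x : K) :
    R (Sinv (LinearMap.adjoint K.subtype u)) x = inner ℝ u (x : V) := by
  rw [← hS, ← LinearMap.comp_apply S Sinv, hSinv, LinearMap.id_apply,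
    LinearMap.adjoint_inner_left, Submodule.subtype_apply]

theorem stmt_3_general {V : Type*} [NormedAddCommGroup V] [InnerProductSpace ℝ V]
    [FiniteDimensional ℝ V]
    (N : ℕ) (Vi : Fin N → Submodule ℝ V)
    (R : ∀ i, LinearMap.BilinForm ℝ (Vi i))
    (hRsymm : ∀ i u v, R i u v = R i v u)
    (hRpos : ∀ i (v : Vi i), v ≠ 0 → 0 < R i v v)
    (S Sinv : ∀ i, (Vi i) →ₗ[ℝ] (Vi i))
    (hS : ∀ i (u v : Vi i), (inner ℝ (S i u) v : ℝ) = R i u v)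
    (hSinv : ∀ i, Sinv i ∘ₗ S i = LinearMap.id ∧ S i ∘ₗ Sinv i = LinearMap.id)
    (B Binv : V →ₗ[ℝ] V)
    (hB : B = ∑ i, (Vi i).subtype ∘ₗ Sinv i ∘ₗ LinearMap.adjoint (Vi i).subtype)
    (hBinv : Binv ∘ₗ B = LinearMap.id ∧ B ∘ₗ Binv = LinearMap.id) :
    ∀ w : V, (inner ℝ (Binv w) w : ℝ) =
      sInf {s : ℝ | ∃ wi : (i : Fin N) → Vi i,
        (∑ i, (wi i : V)) = w ∧ s = ∑ i, R i (wi i) (wi i)} := by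
  intro w
  set wstar : ∀ i, Vi i := fun i => Sinv i (LinearMap.adjoint (Vi i).subtype (Binv w))
  have hnn : ∀ i v, 0 ≤ R i v v := fun i v =>
    (eq_or_ne v 0).elim (fun h => by simp [h]) fun h => (hRpos i v h).le
  have hsum : ∑ i, (wstar i : V) = w := by
    have hBw : B (Binv w) = w := by rw [← LinearMap.comp_apply, hBinv.2, LinearMap.id_apply]
    rw [← hBw, hB]
    simp [wstar, LinearMap.sum_apply]
  have hpair : ∀ wi : ∀ i, Vi i, ∑ i, (wi i : V) = w →
      ∑ i, R i (wstar i) (wi i) = inner ℝ (Binv w) w := by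
    intro wi hwi
    simp_rw [wstar, (R _).apply_adjoint_subtype_eq_inner (hS _) (hSinv _).2, ← inner_sum, hwi]
  exact (isLeast_sum_apply_self_of_sum_apply_eq R hRsymm hnn
    (C := {wi | ∑ i, (wi i : V) = w}) hsum hpair).csInf_eq.symm

/-- Lions' Lemma: variational representation of the additive Schwarz
preconditioner. -/
theorem stmt_3 {V : Type*} [NormedAddCommGroup V] [InnerProductSpace ℝ V]
    [FiniteDimensional ℝ V]
    (N : ℕ) (Vi : Fin N → Submodule ℝ V) (hspan : (⨆ i, Vi i) = ⊤)
    (R : ∀ i, LinearMap.BilinForm ℝ (Vi i))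
    (hRsymm : ∀ i u v, R i u v = R i v u)
    (hRpos : ∀ i (v : Vi i), v ≠ 0 → 0 < R i v v)
    (S Sinv : ∀ i, (Vi i) →ₗ[ℝ] (Vi i))
    (hS : ∀ i (u v : Vi i), (inner ℝ (S i u) v : ℝ) = R i u v)
    (hSinv : ∀ i, Sinv i ∘ₗ S i = LinearMap.id ∧ S i ∘ₗ Sinv i = LinearMap.id)
    (B Binv : V →ₗ[ℝ] V)
    (hB : B = ∑ i, (Vi i).subtype ∘ₗ Sinv i ∘ₗ LinearMap.adjoint (Vi i).subtype)
    (hBinv : Binv ∘ₗ B = LinearMap.id ∧ B ∘ₗ Binv = LinearMap.id) :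
    ∀ w : V, (inner ℝ (Binv w) w : ℝ) =
      sInf {s : ℝ | ∃ wi : (i : Fin N) → Vi i,
        (∑ i, (wi i : V)) = w ∧ s = ∑ i, R i (wi i) (wi i)} :=
  stmt_3_general N Vi R hRsymm hRpos S Sinv hS hSinv B Binv hB hBinv
end

section
/- Let V be a finite-dimensional real inner product space, A a symmetric positive definite bilinear form, and B a symmetric positive definite operator on V such that C₁ A(w,w) ≤ ⟨B⁻¹ w, w⟩ ≤ C₀² A(w,w) for all w ∈ V. Then the condition number of B𝔸 (where 𝔸 is the operator of A) satisfies κ(B𝔸) ≤ C₀²/C₁. -/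
/-!
If `B (𝔸 v) = λ v` with `v ≠ 0`, applying `B⁻¹` and pairing with `v` gives the Rayleigh identity
`A(v,v) = λ ⟨B⁻¹ v, v⟩`. The two-sided bound then confines every eigenvalue to `[1/C₀², 1/C₁]`,
and the ratio of any two eigenvalues is at most `C₀²/C₁`.
-/

theorem Module.End.HasEigenvector.apply_eq_smul_of_comp {R M : Type*} [CommRing R]
    [AddCommGroup M] [Module R M] {B Binv T : Module.End R M} {lam : R} {v : M}
    (hv : Module.End.HasEigenvector (B ∘ₗ T) lam v) (hBinv : Binv ∘ₗ B = LinearMap.id) :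
    T v = lam • Binv v := by
  have h := congrArg Binv hv.apply_eq_smul
  rwa [LinearMap.comp_apply, ← LinearMap.comp_apply Binv B, hBinv, LinearMap.id_apply,
    map_smul] at h

theorem rayleigh_quotient_bounds {a b lam c₀ c₁ : ℝ} (ha : 0 < a) (hc₁ : 0 < c₁)
    (hab : a = lam * b) (hlow : c₁ * a ≤ b) (hupp : b ≤ c₀ * a) :
    lam * c₁ ≤ 1 ∧ 1 ≤ lam * c₀ := by
  have hb : 0 < b := lt_of_lt_of_le (mul_pos hc₁ ha) hlow
  have hlam : 0 < lam := pos_of_mul_pos_left (hab ▸ ha) hb.le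
  constructor <;> nlinarith

section Preconditioner

variable {V : Type*} [NormedAddCommGroup V] [InnerProductSpace ℝ V]

theorem Module.End.HasEigenvalue.preconditioned_bounds {T B Binv : V →ₗ[ℝ] V} {lam : ℝ}
    (hlam : Module.End.HasEigenvalue (B ∘ₗ T) lam)
    (hTpos : ∀ v : V, v ≠ 0 → 0 < (inner ℝ (T v) v : ℝ)) (hBinv : Binv ∘ₗ B = LinearMap.id)
    {c₀ c₁ : ℝ} (hc₁ : 0 < c₁)
    (hbound : ∀ w : V, c₁ * inner ℝ (T w) w ≤ (inner ℝ (Binv w) w : ℝ) ∧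
      (inner ℝ (Binv w) w : ℝ) ≤ c₀ * inner ℝ (T w) w) :
    lam * c₁ ≤ 1 ∧ 1 ≤ lam * c₀ := by
  obtain ⟨v, hv⟩ := hlam.exists_hasEigenvector
  have hrayleigh : (inner ℝ (T v) v : ℝ) = lam * inner ℝ (Binv v) v := by
    rw [hv.apply_eq_smul_of_comp hBinv, real_inner_smul_left]
  exact rayleigh_quotient_bounds (hTpos v hv.2) hc₁ hrayleigh (hbound v).1 (hbound v).2

end Preconditioner

theorem stmt_4_general {V : Type*} [NormedAddCommGroup V] [InnerProductSpace ℝ V]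
    (A : LinearMap.BilinForm ℝ V)
    (hApos : ∀ v : V, v ≠ 0 → 0 < A v v)
    (Aop B Binv : V →ₗ[ℝ] V)
    (hAop : ∀ u v : V, (inner ℝ (Aop u) v : ℝ) = A u v)
    (hBinv : Binv ∘ₗ B = LinearMap.id ∧ B ∘ₗ Binv = LinearMap.id)
    (C₁ C₀ : ℝ) (hC₁ : 0 < C₁)
    (hbound : ∀ w : V, C₁ * A w w ≤ (inner ℝ (Binv w) w : ℝ) ∧
      (inner ℝ (Binv w) w : ℝ) ≤ C₀ ^ 2 * A w w) :
    ∀ lam mu : ℝ, Module.End.HasEigenvalue (B ∘ₗ Aop) lam →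
      Module.End.HasEigenvalue (B ∘ₗ Aop) mu → lam ≤ (C₀ ^ 2 / C₁) * mu := by
  intro lam mu hlam hmu
  have hAop_pos : ∀ v : V, v ≠ 0 → 0 < (inner ℝ (Aop v) v : ℝ) := by
    simpa only [hAop] using hApos
  have hAop_bound : ∀ w : V, C₁ * inner ℝ (Aop w) w ≤ (inner ℝ (Binv w) w : ℝ) ∧
      (inner ℝ (Binv w) w : ℝ) ≤ C₀ ^ 2 * inner ℝ (Aop w) w := by
    simpa only [hAop] using hbound
  have hlam_le := (hlam.preconditioned_bounds hAop_pos hBinv.1 hC₁ hAop_bound).1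
  have hmu_ge := (hmu.preconditioned_bounds hAop_pos hBinv.1 hC₁ hAop_bound).2
  rw [div_mul_eq_mul_div, le_div_iff₀ hC₁]
  linarith

/-- Two-sided bounds on the preconditioner imply a bound on the condition
number of the preconditioned operator B𝔸. -/
theorem stmt_4 {V : Type*} [NormedAddCommGroup V] [InnerProductSpace ℝ V]
    [FiniteDimensional ℝ V]
    (A : LinearMap.BilinForm ℝ V)
    (hAsymm : ∀ u v, A u v = A v u) (hApos : ∀ v : V, v ≠ 0 → 0 < A v v)
    (Aop B Binv : V →ₗ[ℝ] V)
    (hAop : ∀ u v : V, (inner ℝ (Aop u) v : ℝ) = A u v)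
    (hBsymm : ∀ u v : V, (inner ℝ (B u) v : ℝ) = inner ℝ u (B v))
    (hBpos : ∀ v : V, v ≠ 0 → 0 < (inner ℝ (B v) v : ℝ))
    (hBinv : Binv ∘ₗ B = LinearMap.id ∧ B ∘ₗ Binv = LinearMap.id)
    (C₁ C₀ : ℝ) (hC₁ : 0 < C₁) (hC₀ : 0 < C₀)
    (hbound : ∀ w : V, C₁ * A w w ≤ (inner ℝ (Binv w) w : ℝ) ∧
      (inner ℝ (Binv w) w : ℝ) ≤ C₀ ^ 2 * A w w) :
    ∀ lam mu : ℝ, Module.End.HasEigenvalue (B ∘ₗ Aop) lam →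
      Module.End.HasEigenvalue (B ∘ₗ Aop) mu → lam ≤ (C₀ ^ 2 / C₁) * mu :=
  stmt_4_general A hApos Aop B Binv hAop hBinv C₁ C₀ hC₁ hbound
end

section
/- Suppose V₁, …, V_N are subspaces of a finite-dimensional inner product space V with V = Σᵢ Vᵢ, and there is a constant K such that every v ∈ V has a decomposition v = Σᵢ vᵢ, vᵢ ∈ Vᵢ, with Σᵢ A(vᵢ, vᵢ) ≤ K A(v, v) for a symmetric positive definite bilinear form A. Then the additive Schwarz operator P = Σᵢ Pᵢ (where Pᵢ is the A-orthogonal projection onto Vᵢ) satisfies A(Pv, v) ≥ K⁻¹ A(v,v) for all v ∈ V, i.e., λ_min(P) ≥ K⁻¹. -/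
lemma bilin_cauchy_schwarz {V : Type*} [AddCommGroup V] [Module ℝ V]
    (A : LinearMap.BilinForm ℝ V)
    (hsymm : ∀ u v, A u v = A v u)
    (hpos : ∀ v : V, v ≠ 0 → 0 < A v v) (x y : V) :
    (A x y) ^ 2 ≤ A x x * A y y := by
  have hAnn : ∀ z : V, 0 ≤ A z z := by
    intro z
    rcases eq_or_ne z 0 with h | h
    · simp [h]
    · exact (hpos z h).le
  rcases eq_or_ne x 0 with h | h
  · simp [h]
  · have hx : 0 < A x x := hpos x h
    have key := hAnn ((A x x) • y - (A x y) • x)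
    simp only [map_sub, map_smul, LinearMap.sub_apply, LinearMap.smul_apply,
      smul_eq_mul] at key
    rw [hsymm y x] at key
    nlinarith [key, hx]

/-- Stable decomposition implies a lower bound on the additive Schwarz
operator: A(Pv,v) ≥ K⁻¹ A(v,v). -/
theorem stmt_15 {V : Type*} [AddCommGroup V] [Module ℝ V] [FiniteDimensional ℝ V]
    (A : LinearMap.BilinForm ℝ V)
    (hsymm : ∀ u v, A u v = A v u)
    (hpos : ∀ v : V, v ≠ 0 → 0 < A v v)
    (N : ℕ) (Vi : Fin N → Submodule ℝ V) (hspan : (⨆ i, Vi i) = ⊤)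
    (P : Fin N → (V →ₗ[ℝ] V))
    (hPmem : ∀ i (v : V), P i v ∈ Vi i)
    (hPproj : ∀ i (v : V), ∀ w ∈ Vi i, A (P i v) w = A v w)
    (K : ℝ) (hK : 0 < K)
    (hstable : ∀ v : V, ∃ f : Fin N → V, (∀ i, f i ∈ Vi i) ∧
      (∑ i, f i) = v ∧ (∑ i, A (f i) (f i)) ≤ K * A v v) :
    ∀ v : V, K⁻¹ * A v v ≤ A ((∑ i, P i) v) v := by
  intro v
  have hAnn : ∀ z : V, 0 ≤ A z z := by
    intro z
    rcases eq_or_ne z 0 with h | h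
    · simp [h]
    · exact (hpos z h).le
  have hPv : A ((∑ i, P i) v) v = ∑ i, A (P i v) (P i v) := by
    rw [LinearMap.sum_apply, map_sum]
    simp only [LinearMap.sum_apply]
    refine Finset.sum_congr rfl fun i _ => ?_
    rw [hsymm (P i v) v, ← hPproj i v (P i v) (hPmem i v), hsymm]
  rcases eq_or_ne v 0 with hv | hv
  · simp [hv]
  have hvv : 0 < A v v := hpos v hv
  obtain ⟨f, hfmem, hfsum, hfstab⟩ := hstable v
  have h1 : A v v = ∑ i, A (P i v) (f i) := by
    calc A v v = A v (∑ i, f i) := by rw [hfsum]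
    _ = ∑ i, A v (f i) := map_sum _ _ _
    _ = ∑ i, A (P i v) (f i) :=
      Finset.sum_congr rfl fun i _ => (hPproj i v (f i) (hfmem i)).symm
  -- pointwise Cauchy-Schwarz
  have h2 : ∀ i : Fin N, A (P i v) (f i) ≤
      Real.sqrt (A (P i v) (P i v)) * Real.sqrt (A (f i) (f i)) := by
    intro i
    have hcs := bilin_cauchy_schwarz A hsymm hpos (P i v) (f i)
    calc A (P i v) (f i) ≤ |A (P i v) (f i)| := le_abs_self _
    _ = Real.sqrt ((A (P i v) (f i))^2) := (Real.sqrt_sq_eq_abs _).symm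
    _ ≤ Real.sqrt (A (P i v) (P i v) * A (f i) (f i)) := Real.sqrt_le_sqrt hcs
    _ = _ := Real.sqrt_mul (hAnn _) _
  have h3 : A v v ≤ ∑ i, Real.sqrt (A (P i v) (P i v)) * Real.sqrt (A (f i) (f i)) := by
    rw [h1]; exact Finset.sum_le_sum fun i _ => h2 i
  have h4 := Finset.sum_mul_sq_le_sq_mul_sq Finset.univ
    (fun i => Real.sqrt (A (P i v) (P i v))) (fun i => Real.sqrt (A (f i) (f i)))
  simp only [Real.sq_sqrt (hAnn _)] at h4
  have h5 : (A v v)^2 ≤ (∑ i, A (P i v) (P i v)) * (∑ i, A (f i) (f i)) := by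
    calc (A v v)^2 ≤ (∑ i, Real.sqrt (A (P i v) (P i v)) * Real.sqrt (A (f i) (f i)))^2 := by
          apply pow_le_pow_left₀ hvv.le h3
    _ ≤ _ := h4
  have h6 : (A v v)^2 ≤ A ((∑ i, P i) v) v * (K * A v v) := by
    rw [hPv]
    refine h5.trans (mul_le_mul_of_nonneg_left hfstab ?_)
    exact Finset.sum_nonneg fun i _ => hAnn _
  rw [hPv] at *
  rw [inv_mul_le_iff₀ hK]
  nlinarith [h6, hvv, hK]
end

section
/- Let V be a finite-dimensional inner product space, V₁, …, V_N subspaces, and suppose each v ∈ V belongs to at most N₀ of the subspaces' 'supports' in the sense that the Gram interaction bound A(Σᵢ vᵢ, Σⱼ vⱼ) ≤ N₀ Σᵢ A(vᵢ, vᵢ) holds for all choices vᵢ ∈ Vᵢ. Then the additive Schwarz operator P = Σᵢ Pᵢ (Pᵢ the A-orthogonal projections) satisfies A(Pv, v) ≤ N₀ A(v, v), i.e., λ_max(P) ≤ N₀. -/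
/-- Bounded interaction implies an upper bound on the additive Schwarz
operator: A(Pv,v) ≤ N₀ A(v,v). -/
theorem stmt_16 {V : Type*} [AddCommGroup V] [Module ℝ V] [FiniteDimensional ℝ V]
    (A : LinearMap.BilinForm ℝ V)
    (hsymm : ∀ u v, A u v = A v u)
    (hpos : ∀ v : V, v ≠ 0 → 0 < A v v)
    (N : ℕ) (Vi : Fin N → Submodule ℝ V)
    (P : Fin N → (V →ₗ[ℝ] V))
    (hPmem : ∀ i (v : V), P i v ∈ Vi i)
    (hPproj : ∀ i (v : V), ∀ w ∈ Vi i, A (P i v) w = A v w)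
    (N₀ : ℝ) (hN₀ : 0 < N₀)
    (hinteract : ∀ f : Fin N → V, (∀ i, f i ∈ Vi i) →
      A (∑ i, f i) (∑ i, f i) ≤ N₀ * ∑ i, A (f i) (f i)) :
    ∀ v : V, A ((∑ i, P i) v) v ≤ N₀ * A v v := by
  intro v
  have hnn : ∀ u : V, 0 ≤ A u u := by
    intro u
    rcases eq_or_ne u 0 with h | h
    · simp [h]
    · exact (hpos u h).le
  have CS : ∀ u w : V, A u w ^ 2 ≤ A u u * A w w := by
    intro u w
    rcases eq_or_ne w 0 with h | h
    · simp [h]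
    · have hw := hpos w h
      have h0 := hnn (A w w • u - A u w • w)
      have hexp : A (A w w • u - A u w • w) (A w w • u - A u w • w)
          = A w w * (A u u * A w w - A u w ^ 2) := by
        simp only [map_sub, map_smul, LinearMap.sub_apply, LinearMap.smul_apply,
          smul_eq_mul, LinearMap.sub_apply]
        rw [hsymm w u]
        ring
      rw [hexp] at h0
      nlinarith
  set f : Fin N → V := fun i => P i v with hf
  have hmem : ∀ i, f i ∈ Vi i := fun i => hPmem i v
  have hPv : (∑ i, P i) v = ∑ i, f i := by simp [f]
  have hS : A (∑ i, f i) v = ∑ i, A (f i) (f i) := by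
    rw [map_sum, LinearMap.sum_apply]
    refine Finset.sum_congr rfl fun i _ => ?_
    rw [hsymm (f i) v]
    exact (hPproj i v (f i) (hmem i)).symm
  rw [hPv, hS]
  set S := ∑ i, A (f i) (f i) with hSdef
  have hSnn : 0 ≤ S := Finset.sum_nonneg fun i _ => hnn _
  have hint : A (∑ i, f i) (∑ i, f i) ≤ N₀ * S := hinteract f hmem
  have key : S ^ 2 ≤ N₀ * S * A v v := by
    calc S ^ 2 = A (∑ i, f i) v ^ 2 := by rw [hS]
      _ ≤ A (∑ i, f i) (∑ i, f i) * A v v := CS _ _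
      _ ≤ N₀ * S * A v v := by
          exact mul_le_mul_of_nonneg_right hint (hnn v)
  rcases hSnn.eq_or_lt with h | h
  · rw [← h]
    exact mul_nonneg hN₀.le (hnn v)
  · nlinarith
end
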